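/- Let β, Δ, α ∈ ℂ with β ≠ 0, and let f be a polynomial in two complex variables. If β·(f(x+y, z) − f(x, z)) = 2y·(x + Δ·(y+z) + α) − β·y² for all complex numbers x, y, z, then β = 2Δ − 1 and there exists a one-variable complex polynomial φ such that f(x, z) = (1/β)·x² + (2/β)·x·(Δ·z + α) + φ(z) for all complex x, z. -/
import Mathlib


/-- Evaluation of a two-variable polynomial at a pair of complex numbers. -/
noncomputable def ev (f : MvPolynomial (Fin 2) ℂ) (x z : ℂ) : ℂ :=
  MvPolynomial.eval ![x, z] f

/-- Solution of the functional equation for f_{ii}^{[2]}. -/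
theorem stmt_15 (β Δ α : ℂ) (hβ : β ≠ 0) (f : MvPolynomial (Fin 2) ℂ)
    (h : ∀ x y z : ℂ,
      β * (ev f (x + y) z - ev f x z) = 2 * y * (x + Δ * (y + z) + α) - β * y ^ 2) :
    β = 2 * Δ - 1 ∧
      ∃ φ : Polynomial ℂ, ∀ x z : ℂ,
        ev f x z = (1 / β) * x ^ 2 + (2 / β) * x * (Δ * z + α) + φ.eval z := by
  have key : ∀ x y z : ℂ,
      (2*(x+y)*(Δ*((x+y)+z)+α) - β*(x+y)^2) - (2*x*(Δ*(x+z)+α) - β*x^2)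
        = 2*y*(x+Δ*(y+z)+α) - β*y^2 := by
    intro x y z
    have a := h 0 (x+y) z
    have b := h 0 x z
    have c := h x y z
    simp only [zero_add] at a b
    linear_combination b + c - a
  have hβΔ : β = 2 * Δ - 1 := by
    have k := key 1 1 0
    linear_combination -k/2
  refine ⟨hβΔ, ?_⟩
  refine ⟨MvPolynomial.eval₂ Polynomial.C ![0, Polynomial.X] f, ?_⟩
  intro x z
  have hφ : Polynomial.eval z (MvPolynomial.eval₂ Polynomial.C ![0, Polynomial.X] f)
      = ev f 0 z := by
    rw [show Polynomial.eval z (MvPolynomial.eval₂ Polynomial.C ![0, Polynomial.X] f)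
        = Polynomial.evalRingHom z (MvPolynomial.eval₂ Polynomial.C ![0, Polynomial.X] f) from rfl,
      MvPolynomial.eval₂_comp_left]
    unfold ev
    rw [MvPolynomial.eval]
    congr 1
    · ext a; simp
    · funext i; fin_cases i <;> simp
  rw [hφ]
  have hx := h 0 x z
  simp only [zero_add] at hx
  field_simp
  ring_nf
  linear_combination hx - x^2 * hβΔ
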